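/- Let J₂ be the operator J₂(B)ⁱ := (1/2) ∑_{j,k} ε^{ijk} (Sʲ Bᵏ − Bᵏ Sʲ) on triples of antisymmetric real 4×4 matrices. Then for every symmetric real 4×4 matrix h, the triple Bⁱ := (1/2)(h Sⁱ + Sⁱ h) (the coordinate form of h_{[μ}{}^α Σⁱ_{|α|ν]}) satisfies J₂(B)ⁱ = (1/2) tr(h) Sⁱ for i = 1,2,3. In particular, if tr(h) = 0 then B lies in the kernel of J₂. -/

import Mathlib

open Matrix BigOperators

/-- Levi-Civita symbol on three indices, `ε 0 1 2 = 1`. -/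
noncomputable def eps3 (i j k : Fin 3) : ℝ :=
  Matrix.det (Matrix.of fun a b => if ![i, j, k] a = b then (1 : ℝ) else 0)

/-- The canonical matrices `S¹, S², S³`. -/
def Scan : Fin 3 → Matrix (Fin 4) (Fin 4) ℝ :=
  ![!![0, 0, 0, -1; 0, 0, -1, 0; 0, 1, 0, 0; 1, 0, 0, 0],
    !![0, 0, 1, 0; 0, 0, 0, -1; -1, 0, 0, 0; 0, 1, 0, 0],
    !![0, -1, 0, 0; 1, 0, 0, 0; 0, 0, 0, -1; 0, 0, 1, 0]]

/-- The operator `J₂(B)ⁱ = (1/2) ∑_{jk} ε^{ijk} (Sʲ Bᵏ − Bᵏ Sʲ)`. -/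
noncomputable def J2 (B : Fin 3 → Matrix (Fin 4) (Fin 4) ℝ) :
    Fin 3 → Matrix (Fin 4) (Fin 4) ℝ :=
  fun i => (1 / 2 : ℝ) • ∑ j, ∑ k, eps3 i j k • (Scan j * B k - B k * Scan j)

/-!
The matrices `Sⁱ` satisfy the quaternion relations `Sʲ Sᵏ = Sⁱ = -Sᵏ Sʲ` for every cyclic
triple `(i, j, k)`, and for symmetric `h` the sandwich identity
`Sʲ h Sᵏ - Sᵏ h Sʲ = tr(h) Sⁱ - (Sⁱ h + h Sⁱ)`, which is linear in `h` and checked entrywise.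
Expanding `[Sʲ, {h, Sᵏ}] - [Sᵏ, {h, Sʲ}]`, the anticommutator `{h, Sⁱ}` coming from the quaternion
relations cancels the one in the sandwich identity, and only `2 tr(h) Sⁱ` survives.
-/

attribute [local instance] LieRing.ofAssociativeRing

lemma eps3_eq (i j k : Fin 3) : eps3 i j k =
    ![![![0, 0, 0], ![0, 0, 1], ![0, -1, 0]],
      ![![0, 0, -1], ![0, 0, 0], ![1, 0, 0]],
      ![![0, 1, 0], ![-1, 0, 0], ![0, 0, 0]]] i j k := by
  fin_cases i <;> fin_cases j <;> fin_cases k <;> simp [eps3, Matrix.det_fin_three]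

lemma J2_apply (B : Fin 3 → Matrix (Fin 4) (Fin 4) ℝ) (i : Fin 3) :
    J2 B i = (1 / 2 : ℝ) • (⁅Scan (i + 1), B (i + 2)⁆ - ⁅Scan (i + 2), B (i + 1)⁆) := by
  fin_cases i <;> simp [J2, Fin.sum_univ_three, eps3_eq, Ring.lie_def] <;> module

lemma Scan_add_one_mul_Scan_add_two (i : Fin 3) : Scan (i + 1) * Scan (i + 2) = Scan i := by
  ext a b
  simp only [Matrix.mul_apply, Fin.sum_univ_four]
  fin_cases i <;> fin_cases a <;> fin_cases b <;> simp [Scan]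

lemma Scan_add_two_mul_Scan_add_one (i : Fin 3) : Scan (i + 2) * Scan (i + 1) = -Scan i := by
  ext a b
  simp only [Matrix.mul_apply, Matrix.neg_apply, Fin.sum_univ_four]
  fin_cases i <;> fin_cases a <;> fin_cases b <;> simp [Scan]

lemma Scan_mul_mul_Scan_sub {h : Matrix (Fin 4) (Fin 4) ℝ} (hh : h.IsSymm) (i : Fin 3) :
    Scan (i + 1) * h * Scan (i + 2) - Scan (i + 2) * h * Scan (i + 1)
      = h.trace • Scan i - (Scan i * h + h * Scan i) := by
  have hs : ∀ a b, h b a = h a b := hh.apply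
  ext a b
  simp only [Matrix.sub_apply, Matrix.add_apply, Matrix.smul_apply, Matrix.mul_apply,
    Fin.sum_univ_four, Matrix.trace, Matrix.diag, smul_eq_mul]
  fin_cases i <;> fin_cases a <;> fin_cases b <;>
    simp [Scan, hs 0 1, hs 0 2, hs 0 3, hs 1 2, hs 1 3, hs 2 3] <;> ring

lemma lie_add_mul_sub_lie_add_mul {A : Type*} [Ring A] (h s t : A) :
    ⁅s, h * t + t * h⁆ - ⁅t, h * s + s * h⁆
      = 2 • (s * h * t - t * h * s) + (s * t - t * s) * h + h * (s * t - t * s) := by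
  simp only [Ring.lie_def]
  noncomm_ring

lemma J2_symmetric_orbit_apply {h : Matrix (Fin 4) (Fin 4) ℝ} (hh : h.IsSymm) (i : Fin 3) :
    J2 (fun l => (1 / 2 : ℝ) • (h * Scan l + Scan l * h)) i
      = ((1 / 2 : ℝ) * h.trace) • Scan i := by
  rw [J2_apply]
  simp only [lie_smul, ← smul_sub, lie_add_mul_sub_lie_add_mul, Scan_mul_mul_Scan_sub hh,
    Scan_add_one_mul_Scan_add_two, Scan_add_two_mul_Scan_add_one, sub_neg_eq_add, add_mul,
    mul_add]
  module

/-- for symmetric `h` and `Bⁱ = (1/2)(h Sⁱ + Sⁱ h)` one has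
`J₂(B)ⁱ = (1/2) tr(h) Sⁱ`; in particular `tr(h) = 0` implies `J₂(B) = 0`. -/
theorem J2_on_symmetric_orbit (h : Matrix (Fin 4) (Fin 4) ℝ) (hsymm : hᵀ = h) :
    (∀ i : Fin 3,
      J2 (fun l => (1 / 2 : ℝ) • (h * Scan l + Scan l * h)) i
        = ((1 / 2 : ℝ) * h.trace) • Scan i) ∧
    (h.trace = 0 →
      J2 (fun l => (1 / 2 : ℝ) • (h * Scan l + Scan l * h)) = 0) := by
  refine ⟨J2_symmetric_orbit_apply hsymm, fun htr => funext fun i => ?_⟩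
  rw [J2_symmetric_orbit_apply hsymm, htr, mul_zero, zero_smul, Pi.zero_apply]
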